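/- arXiv:1810.09746 — 6 statements merged into one kernel-verified Lean document; each statement's English description precedes it below -/
import Mathlib

section
/- (C-bound) For binary classification, if the first moment of the margin M_ρ is strictly positive, then the expected loss of the ρ-weighted majority vote satisfies L(MV_ρ) ≤ 1 − M_ρ²/M_{ρ²}. -/
/-!
With `A = {M > 0}` we have `E[M] ≤ E[M 1_A]`, and Cauchy–Schwarz against `1_A` gives
`E[M]² ≤ E[M²] P(A) = E[M²] (1 - P(M ≤ 0))`.
-/

open MeasureTheory

section

variable {Ω : Type*} [MeasurableSpace Ω] {μ : Measure Ω} {f : Ω → ℝ}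

/-- The discriminant of the nonnegative quadratic `t ↦ ∫ (f - t)² ∂μ`. -/
theorem sq_integral_le_measureReal_univ_mul_integral_sq [IsFiniteMeasure μ] (hf : MemLp f 2 μ) :
    (∫ ω, f ω ∂μ) ^ 2 ≤ μ.real Set.univ * ∫ ω, f ω ^ 2 ∂μ := by
  have hf1 : Integrable f μ := hf.integrable one_le_two
  have hf2 : Integrable (fun ω => f ω ^ 2) μ := hf.integrable_sq
  have hquad (t : ℝ) :
      0 ≤ μ.real Set.univ * (t * t) + (-2 * ∫ ω, f ω ∂μ) * t + ∫ ω, f ω ^ 2 ∂μ := by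
    have hexpand : ∫ ω, (f ω - t) ^ 2 ∂μ
        = ∫ ω, f ω ^ 2 ∂μ - 2 * t * ∫ ω, f ω ∂μ + μ.real Set.univ * t ^ 2 := by
      calc ∫ ω, (f ω - t) ^ 2 ∂μ = ∫ ω, (f ω ^ 2 - 2 * t * f ω) + t ^ 2 ∂μ := by
            congr with ω; ring
        _ = _ := by
          rw [integral_add (f := fun ω => f ω ^ 2 - 2 * t * f ω) (hf2.sub (hf1.const_mul _))
              (integrable_const _),
            integral_sub hf2 (hf1.const_mul _), integral_const_mul, integral_const, smul_eq_mul]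
    have hnonneg : 0 ≤ ∫ ω, (f ω - t) ^ 2 ∂μ := integral_nonneg fun ω => sq_nonneg (f ω - t)
    linarith
  have hdiscrim := discrim_le_zero hquad
  rw [discrim] at hdiscrim
  linarith

theorem sq_integral_le_integral_sq_mul_measureReal_setOf_pos [IsFiniteMeasure μ]
    (hf : MemLp f 2 μ) (h : 0 ≤ ∫ ω, f ω ∂μ) :
    (∫ ω, f ω ∂μ) ^ 2 ≤ (∫ ω, f ω ^ 2 ∂μ) * μ.real {ω | 0 < f ω} := by
  set A := {ω | 0 < f ω}
  have hA : NullMeasurableSet A μ := nullMeasurableSet_lt aemeasurable_const hf.1.aemeasurable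
  have hle_restrict : ∫ ω, f ω ∂μ ≤ ∫ ω in A, f ω ∂μ := by
    have hcompl : ∫ ω in Aᶜ, f ω ∂μ ≤ 0 := setIntegral_nonpos_of_ae_restrict <| by
      filter_upwards [ae_restrict_mem₀ hA.compl] with ω hω
      simpa [A] using hω
    linarith [integral_add_compl₀ hA (hf.integrable one_le_two)]
  calc (∫ ω, f ω ∂μ) ^ 2 ≤ (∫ ω in A, f ω ∂μ) ^ 2 := pow_le_pow_left₀ h hle_restrict 2
    _ ≤ (μ.restrict A).real Set.univ * ∫ ω in A, f ω ^ 2 ∂μ :=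
      sq_integral_le_measureReal_univ_mul_integral_sq (hf.restrict A)
    _ ≤ (∫ ω, f ω ^ 2 ∂μ) * μ.real A := by
      rw [measureReal_restrict_apply_univ, mul_comm]
      exact mul_le_mul_of_nonneg_right
        (setIntegral_le_integral hf.integrable_sq (ae_of_all _ fun ω => sq_nonneg (f ω)))
        measureReal_nonneg

theorem measureReal_setOf_nonpos_le_one_sub_sq_integral_div_integral_sq [IsProbabilityMeasure μ]
    (hpos : 0 < ∫ ω, f ω ∂μ) :
    μ.real {ω | f ω ≤ 0} ≤ 1 - (∫ ω, f ω ∂μ) ^ 2 / ∫ ω, f ω ^ 2 ∂μ := by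
  have hf1 : Integrable f μ := by
    by_contra h
    rw [integral_undef h] at hpos
    exact lt_irrefl 0 hpos
  by_cases hf2 : Integrable (fun ω => f ω ^ 2) μ
  swap
  · rw [integral_undef hf2, div_zero, sub_zero]
    exact measureReal_le_one
  have hf : MemLp f 2 μ := (memLp_two_iff_integrable_sq hf1.1).2 hf2
  have hmoments := sq_integral_le_integral_sq_mul_measureReal_setOf_pos hf hpos.le
  have hcompl : μ.real {ω | f ω ≤ 0} = 1 - μ.real {ω | 0 < f ω} := by
    rw [← probReal_compl_eq_one_sub₀ (nullMeasurableSet_lt aemeasurable_const hf1.1.aemeasurable)]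
    congr with ω
    simp
  have hsq_pos : 0 < ∫ ω, f ω ^ 2 ∂μ := by
    by_contra! hsq_nonpos
    nlinarith [measureReal_nonneg (μ := μ) (s := {ω | 0 < f ω})]
  rw [hcompl, le_sub_comm, sub_sub_cancel, div_le_iff₀ hsq_pos, mul_comm]
  exact hmoments

end

theorem c_bound_general
    (X : Type*) [MeasurableSpace X]
    (μ : Measure (X × ℝ)) [IsProbabilityMeasure μ]
    (H : Type*) [Fintype H]
    (hyp : H → X → ℝ)
    (ρ : H → ℝ)
    (hpos : 0 < ∫ p, p.2 * ∑ h, ρ h * hyp h p.1 ∂μ) :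
    (μ {p | p.2 * ∑ h, ρ h * hyp h p.1 ≤ 0}).toReal ≤
      1 - (∫ p, p.2 * ∑ h, ρ h * hyp h p.1 ∂μ) ^ 2 /
        (∫ p, (p.2 * ∑ h, ρ h * hyp h p.1) ^ 2 ∂μ) :=
  measureReal_setOf_nonpos_le_one_sub_sq_integral_div_integral_sq hpos

/-- The C-bound: in binary classification, if the first moment of the margin is
strictly positive, then the loss of the ρ-weighted majority vote satisfies
`L(MV_ρ) ≤ 1 - M_ρ² / M_{ρ²}`. -/
theorem c_bound
    (X : Type*) [MeasurableSpace X]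
    (μ : Measure (X × ℝ)) [IsProbabilityMeasure μ]
    (H : Type*) [Fintype H]
    (hyp : H → X → ℝ) (hmeas : ∀ h, Measurable (hyp h))
    (hval : ∀ h x, hyp h x = 1 ∨ hyp h x = -1)
    (hlab : ∀ᵐ p ∂μ, p.2 = 1 ∨ p.2 = -1)
    (ρ : H → ℝ) (hρ0 : ∀ h, 0 ≤ ρ h) (hρ1 : ∑ h, ρ h = 1)
    (hpos : 0 < ∫ p, p.2 * ∑ h, ρ h * hyp h p.1 ∂μ) :
    (μ {p | p.2 * ∑ h, ρ h * hyp h p.1 ≤ 0}).toReal ≤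
      1 - (∫ p, p.2 * ∑ h, ρ h * hyp h p.1 ∂μ) ^ 2 /
        (∫ p, (p.2 * ∑ h, ρ h * hyp h p.1) ^ 2 ∂μ) :=
  c_bound_general X μ H hyp ρ hpos
end

section
/- For binary classification, the Gibbs loss decomposes as L_Gibbs(ρ) = e_ρ + ½·d_ρ, where e_ρ is the expected joint error of two independent hypotheses drawn from ρ and d_ρ is the expected disagreement. -/
/-!
For labels and predictions in `{1, -1}`, two hypotheses disagree exactly when one of them errs
and the other does not. Hence their error sets `E₁`, `E₂` satisfy
`μ E₁ + μ E₂ = 2 μ (E₁ ∩ E₂) + μ (E₁ ∆ E₂)`, i.e. joint error plus half the disagreement is the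
mean of the two losses; averaging this over `ρ ⊗ ρ` gives the Gibbs loss.
-/

open MeasureTheory Finset
open scoped symmDiff

theorem ne_iff_xor_ne_of_eq_or_eq {α : Type*} {u v a b y : α} (ha : a = u ∨ a = v)
    (hb : b = u ∨ b = v) (hy : y = u ∨ y = v) : a ≠ b ↔ Xor (a ≠ y) (b ≠ y) := by
  rcases ha with rfl | rfl <;> rcases hb with rfl | rfl <;> rcases hy with rfl | rfl <;> grind

theorem measureReal_add_measureReal_eq_two_mul_inter_add_symmDiff {α : Type*}
    [MeasurableSpace α] (μ : Measure α) [IsFiniteMeasure μ] {s t : Set α}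
    (hs : MeasurableSet s) (ht : MeasurableSet t) :
    μ.real s + μ.real t = 2 * μ.real (s ∩ t) + μ.real (s ∆ t) := by
  rw [Set.symmDiff_def, measureReal_union disjoint_sdiff_sdiff (ht.diff hs),
    ← measureReal_inter_add_sdiff ht (s := s), ← measureReal_inter_add_sdiff hs (s := t),
    Set.inter_comm t s]
  ring

theorem sum_sum_mul_mul_add {ι R : Type*} [CommSemiring R] (s : Finset ι) (w f : ι → R) :
    ∑ i ∈ s, ∑ j ∈ s, w i * w j * (f i + f j) = 2 * (∑ i ∈ s, w i) * ∑ i ∈ s, w i * f i := by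
  have (i j : ι) : w i * w j * (f i + f j) = w j * (w i * f i) + w i * (w j * f j) := by ring
  simp only [this, sum_add_distrib, ← mul_sum, ← sum_mul]
  ring

section ErrorSet

variable {X Y : Type*} [MeasurableSpace X] [MeasurableSpace Y]

def errorSet (hyp : X → Y) : Set (X × Y) := {p | hyp p.1 ≠ p.2}

theorem measurableSet_errorSet [MeasurableEq Y] {hyp : X → Y} (hmeas : Measurable hyp) :
    MeasurableSet (errorSet hyp) :=
  (measurableSet_eq_fun (hmeas.comp measurable_fst) measurable_snd).compl

theorem disagreementSet_ae_eq_symmDiff_errorSet {μ : Measure (X × Y)} {u v : Y}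
    {hyp₁ hyp₂ : X → Y} (hval₁ : ∀ x, hyp₁ x = u ∨ hyp₁ x = v)
    (hval₂ : ∀ x, hyp₂ x = u ∨ hyp₂ x = v) (hlab : ∀ᵐ p ∂μ, p.2 = u ∨ p.2 = v) :
    {p : X × Y | hyp₁ p.1 ≠ hyp₂ p.1} =ᵐ[μ] errorSet hyp₁ ∆ errorSet hyp₂ := by
  filter_upwards [hlab] with p hp
  exact propext (ne_iff_xor_ne_of_eq_or_eq (hval₁ p.1) (hval₂ p.1) hp)

end ErrorSet

theorem gibbs_loss_decomposition_general
    (X : Type*) [MeasurableSpace X]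
    (μ : Measure (X × ℝ)) [IsProbabilityMeasure μ]
    (H : Type*) [Fintype H]
    (hyp : H → X → ℝ) (hmeas : ∀ h, Measurable (hyp h))
    (hval : ∀ h x, hyp h x = 1 ∨ hyp h x = -1)
    (hlab : ∀ᵐ p ∂μ, p.2 = 1 ∨ p.2 = -1)
    (ρ : H → ℝ) (hρ1 : ∑ h, ρ h = 1)
    (e d : ℝ)
    (he : e = ∑ h₁, ∑ h₂, ρ h₁ * ρ h₂ *
        (μ {p | hyp h₁ p.1 ≠ p.2 ∧ hyp h₂ p.1 ≠ p.2}).toReal)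
    (hd : d = ∑ h₁, ∑ h₂, ρ h₁ * ρ h₂ *
        (μ {p | hyp h₁ p.1 ≠ hyp h₂ p.1}).toReal) :
    ∑ h, ρ h * (μ {p | hyp h p.1 ≠ p.2}).toReal = e + d / 2 := by
  have pair (h₁ h₂ : H) : 2 * μ.real {p | hyp h₁ p.1 ≠ p.2 ∧ hyp h₂ p.1 ≠ p.2}
      + μ.real {p | hyp h₁ p.1 ≠ hyp h₂ p.1}
      = μ.real {p | hyp h₁ p.1 ≠ p.2} + μ.real {p | hyp h₂ p.1 ≠ p.2} := by
    rw [measureReal_congr (disagreementSet_ae_eq_symmDiff_errorSet (hval h₁) (hval h₂) hlab)]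
    exact (measureReal_add_measureReal_eq_two_mul_inter_add_symmDiff μ
      (measurableSet_errorSet (hmeas h₁)) (measurableSet_errorSet (hmeas h₂))).symm
  simp only [he, hd, ← measureReal_def]
  calc ∑ h, ρ h * μ.real {p | hyp h p.1 ≠ p.2}
      = (∑ h₁, ∑ h₂, ρ h₁ * ρ h₂ *
          (μ.real {p | hyp h₁ p.1 ≠ p.2} + μ.real {p | hyp h₂ p.1 ≠ p.2})) / 2 := by
        rw [sum_sum_mul_mul_add, hρ1]; ring
    _ = (∑ h₁, ∑ h₂, ρ h₁ * ρ h₂ * (2 * μ.real {p | hyp h₁ p.1 ≠ p.2 ∧ hyp h₂ p.1 ≠ p.2}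
          + μ.real {p | hyp h₁ p.1 ≠ hyp h₂ p.1})) / 2 := by simp only [pair]
    _ = _ := by simp only [mul_add, sum_add_distrib, mul_left_comm _ (2 : ℝ), ← mul_sum]; ring

/-- In binary classification, the Gibbs loss decomposes as
`L_Gibbs(ρ) = e_ρ + d_ρ/2`, where `e_ρ` is the expected joint error of two
independent hypotheses drawn from `ρ` and `d_ρ` is the expected disagreement. -/
theorem gibbs_loss_decomposition
    (X : Type*) [MeasurableSpace X]
    (μ : Measure (X × ℝ)) [IsProbabilityMeasure μ]
    (H : Type*) [Fintype H]
    (hyp : H → X → ℝ) (hmeas : ∀ h, Measurable (hyp h))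
    (hval : ∀ h x, hyp h x = 1 ∨ hyp h x = -1)
    (hlab : ∀ᵐ p ∂μ, p.2 = 1 ∨ p.2 = -1)
    (ρ : H → ℝ) (hρ0 : ∀ h, 0 ≤ ρ h) (hρ1 : ∑ h, ρ h = 1)
    (e d : ℝ)
    (he : e = ∑ h₁, ∑ h₂, ρ h₁ * ρ h₂ *
        (μ {p | hyp h₁ p.1 ≠ p.2 ∧ hyp h₂ p.1 ≠ p.2}).toReal)
    (hd : d = ∑ h₁, ∑ h₂, ρ h₁ * ρ h₂ *
        (μ {p | hyp h₁ p.1 ≠ hyp h₂ p.1}).toReal) :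
    ∑ h, ρ h * (μ {p | hyp h p.1 ≠ p.2}).toReal = e + d / 2 :=
  gibbs_loss_decomposition_general X μ H hyp hmeas hval hlab ρ hρ1 e d he hd
end

section
/- (Refined Pinsker inequality) For 0 ≤ p ≤ q < 1, the binary KL divergence satisfies kl(p‖q) ≥ (q − p)²/(2q). -/
/-!
Fix `p` and move the second argument `s` of `kl(p‖s)` from `p` to `q`. Its derivative in `s` is
`(s - p) / (s (1 - s))`, which on `[p, q]` dominates `(s - p) / q`, the derivative of
`(s - p)² / (2q)`, because `s (1 - s) ≤ s ≤ q`. Both functions vanish at `s = p`.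
-/

/-- Binary KL divergence `kl(p‖q)` with the usual conventions at the boundary. -/
noncomputable def klBer (p q : ℝ) : ℝ :=
  p * Real.log (p / q) + (1 - p) * Real.log ((1 - p) / (1 - q))

open Real Set

lemma mul_log_div_eq_sub (a : ℝ) {t : ℝ} (ht : t ≠ 0) :
    a * log (a / t) = a * log a - a * log t := by
  rcases eq_or_ne a 0 with rfl | ha
  · simp
  · rw [log_div ha ht]
    ring

@[simp]
lemma klBer_self (p : ℝ) : klBer p p = 0 := by
  have hlog (a : ℝ) : log (a / a) = 0 := by
    rcases eq_or_ne a 0 with rfl | ha <;> simp [*]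
  simp [klBer, hlog]

lemma klBer_eq_sub_log {p s : ℝ} (hs₀ : s ≠ 0) (hs₁ : s ≠ 1) :
    klBer p s = p * log p + (1 - p) * log (1 - p) - p * log s - (1 - p) * log (1 - s) := by
  rw [klBer, mul_log_div_eq_sub p hs₀, mul_log_div_eq_sub (1 - p) (sub_ne_zero.mpr hs₁.symm)]
  ring

lemma hasDerivAt_klBer_right (p : ℝ) {s : ℝ} (hs₀ : 0 < s) (hs₁ : s < 1) :
    HasDerivAt (klBer p) ((s - p) / (s * (1 - s))) s := by
  have h1s : 0 < 1 - s := sub_pos.mpr hs₁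
  have hlog := (((hasDerivAt_log hs₀.ne').const_mul p).const_sub
      (p * log p + (1 - p) * log (1 - p))).sub
      ((((hasDerivAt_id' s).const_sub 1).log h1s.ne').const_mul (1 - p))
  have heq : klBer p =ᶠ[nhds s] fun t => p * log p + (1 - p) * log (1 - p) - p * log t
      - (1 - p) * log (1 - t) := by
    filter_upwards [isOpen_Ioo.mem_nhds ⟨hs₀, hs₁⟩] with t ht
    exact klBer_eq_sub_log ht.1.ne' ht.2.ne
  refine (hlog.congr_of_eventuallyEq heq).congr_deriv ?_
  field_simp
  ring

lemma continuousOn_klBer_right {p q : ℝ} (hp : 0 ≤ p) (hq : q < 1) :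
    ContinuousOn (klBer p) (Icc p q) := by
  rcases hp.eq_or_lt with rfl | hp
  · have h : klBer 0 = fun s => -log (1 - s) := by
      ext s
      simp [klBer]
    rw [h]
    exact ((continuousOn_const.sub continuousOn_id).log
      fun s hs => (sub_pos.mpr (hs.2.trans_lt hq)).ne').neg
  · exact fun s hs => (hasDerivAt_klBer_right p (hp.trans_le hs.1)
      (hs.2.trans_lt hq)).continuousAt.continuousWithinAt

lemma monotoneOn_klBer_sub_sq {p q : ℝ} (hp : 0 ≤ p) (hq : q < 1) :
    MonotoneOn (fun s => klBer p s - (s - p) ^ 2 / (2 * q)) (Icc p q) := by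
  refine monotoneOn_of_hasDerivWithinAt_nonneg (convex_Icc p q)
    ((continuousOn_klBer_right hp hq).sub (by fun_prop))
    (f' := fun s => (s - p) / (s * (1 - s)) - (s - p) / q) (fun s hs => ?_) (fun s hs => ?_)
  all_goals
    rw [interior_Icc] at hs
    have hs₀ : 0 < s := hp.trans_lt hs.1
    have hs₁ : s < 1 := hs.2.trans hq
  · have hsq : HasDerivAt (fun t => (t - p) ^ 2 / (2 * q)) ((s - p) / q) s := by
      refine ((((hasDerivAt_id' s).sub_const p).pow 2).div_const (2 * q)).congr_deriv ?_
      field_simp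
      ring
    exact ((hasDerivAt_klBer_right p hs₀ hs₁).sub hsq).hasDerivWithinAt
  · have hvar : s * (1 - s) ≤ q := by nlinarith [hs.2]
    have hvar₀ : 0 < s * (1 - s) := mul_pos hs₀ (sub_pos.mpr hs₁)
    exact sub_nonneg.mpr (div_le_div_of_nonneg_left (sub_nonneg.mpr hs.1.le) hvar₀ hvar)

/-- Refined Pinsker inequality: for `0 ≤ p ≤ q < 1`,
`kl(p‖q) ≥ (q - p)²/(2q)`. -/
theorem refined_pinsker (p q : ℝ) (hp : 0 ≤ p) (hpq : p ≤ q) (hq : q < 1) :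
    (q - p) ^ 2 / (2 * q) ≤ klBer p q := by
  simpa using
    monotoneOn_klBer_sub_sq hp hq (left_mem_Icc.mpr hpq) (right_mem_Icc.mpr hpq) hpq
end

section
/- The quantity ξ(n) = Σ_{k=0}^{n} C(n,k) (k/n)^k (1 − k/n)^{n−k} satisfies √n ≤ ξ(n) ≤ 2√n for all n ≥ 1. -/
/-!
For `0 < k < n`, writing `m! = σ(m) √(2m) (m/e)^m` with `σ = stirlingSeq`, the `k`-th summand of
`ξ(n)` equals `σ(n) / (σ(k) σ(n-k))` divided by `√(2 v)`, where `v = k(n-k)/n` is the variance of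
`Bin(n, k/n)`. Since `√π ≤ σ ≤ e/√2`, each summand is `1/√v` up to a factor between
`√(2π)/e² ≈ 0.339` and `e/(2π) ≈ 0.433`; the two end terms contribute `2`.
The sum of `1/√v` is symmetric under `k ↦ n - k`, and on the half `k ≤ n/2` the Taylor bounds
`1 + t/2 ≤ (1-t)^(-1/2) ≤ 1 + t` (with `t = k/n`) compare `1/√v` with `1/√k + O(√k/n)`.
Telescoping sums of `1/√k` and `√k` bound the full sum (of true size `π √n`) below by about
`(2√2 + 1/(3√2)) √n ≈ 3.06 √n` and above by about `3.3 √n`. As `0.339 · 3.06 > 1` and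
`0.433 · 3.3 < 2`, this gives both bounds, the upper one for `n ≥ 8`; the cases `n ≤ 7` are
computed directly.
-/

open Finset

/-- `ξ(n) = Σ_{k=0}^n C(n,k) (k/n)^k (1-k/n)^(n-k)` (with the convention `0⁰ = 1`). -/
noncomputable def xi (n : ℕ) : ℝ :=
  ∑ k ∈ Finset.range (n + 1),
    (n.choose k : ℝ) * ((k : ℝ) / n) ^ k * (1 - (k : ℝ) / n) ^ (n - k)

open Real Stirling
open scoped Nat

theorem stirlingSeq_pos_of_ne_zero {m : ℕ} (hm : m ≠ 0) : 0 < stirlingSeq m :=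
  (sqrt_pos.2 pi_pos).trans_le (sqrt_pi_le_stirlingSeq hm)

theorem stirlingSeq_le_exp_one_div_sqrt_two {m : ℕ} (hm : m ≠ 0) : stirlingSeq m ≤ exp 1 / √2 := by
  obtain ⟨p, rfl⟩ := Nat.exists_eq_succ_of_ne_zero hm
  simpa [stirlingSeq_one] using stirlingSeq'_antitone (Nat.zero_le p)

theorem factorial_eq_stirlingSeq_mul {m : ℕ} (hm : m ≠ 0) :
    (m ! : ℝ) = stirlingSeq m * (√(2 * m) * (m / exp 1) ^ m) := by
  rw [stirlingSeq, div_mul_cancel₀]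
  have : (0 : ℝ) < m := by positivity
  positivity

theorem sqrt_two_pi_div_exp_sq_le_stirlingSeq_div {n k : ℕ} (hk : k ≠ 0) (hkn : k < n) :
    √(2 * π) / exp 1 ^ 2 ≤ stirlingSeq n / (stirlingSeq k * stirlingSeq (n - k)) / √2 := by
  have hσ : stirlingSeq k * stirlingSeq (n - k) ≤ exp 1 / √2 * (exp 1 / √2) :=
    mul_le_mul (stirlingSeq_le_exp_one_div_sqrt_two hk) (stirlingSeq_le_exp_one_div_sqrt_two (by omega))
      (stirlingSeq_pos_of_ne_zero (by omega)).le (by positivity)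
  calc √(2 * π) / exp 1 ^ 2 = √π / (exp 1 / √2 * (exp 1 / √2)) / √2 := by
        rw [sqrt_mul zero_le_two]
        field_simp
    _ ≤ _ := by
        gcongr
        · exact (stirlingSeq_pos_of_ne_zero (by omega)).le
        · exact mul_pos (stirlingSeq_pos_of_ne_zero hk) (stirlingSeq_pos_of_ne_zero (by omega))
        · exact sqrt_pi_le_stirlingSeq (by omega)

theorem stirlingSeq_div_le_exp_one_div_two_pi {n k : ℕ} (hk : k ≠ 0) (hkn : k < n) :
    stirlingSeq n / (stirlingSeq k * stirlingSeq (n - k)) / √2 ≤ exp 1 / (2 * π) := by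
  have hσ : π ≤ stirlingSeq k * stirlingSeq (n - k) := by
    rw [← mul_self_sqrt pi_pos.le]
    exact mul_le_mul (sqrt_pi_le_stirlingSeq hk) (sqrt_pi_le_stirlingSeq (by omega))
      (sqrt_nonneg π) (stirlingSeq_pos_of_ne_zero hk).le
  calc _ ≤ exp 1 / √2 / π / √2 := by
        gcongr
        exact stirlingSeq_le_exp_one_div_sqrt_two (by omega)
    _ = exp 1 / (2 * π) := by
        field_simp
        rw [sq_sqrt zero_le_two]

theorem le_sqrt_two_pi_div_exp_sq : (0.3392 : ℝ) ≤ √(2 * π) / exp 1 ^ 2 := by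
  have hπ : (2.5066 : ℝ) ≤ √(2 * π) := le_sqrt_of_sq_le (by nlinarith [pi_gt_d6])
  rw [le_div_iff₀ (by positivity)]
  nlinarith [exp_one_lt_d9, exp_pos 1]

theorem exp_one_div_two_pi_le : exp 1 / (2 * π) ≤ (0.433 : ℝ) := by
  rw [div_le_iff₀ (by positivity)]
  nlinarith [exp_one_lt_d9, pi_gt_d6]

/-- The probability that `Bin(n, k/n)` takes its mean value `k`. -/
noncomputable def binomAtMean (n k : ℕ) : ℝ :=
  (n.choose k : ℝ) * ((k : ℝ) / n) ^ k * (1 - (k : ℝ) / n) ^ (n - k)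

/-- The variance of `Bin(n, k/n)`. -/
noncomputable def binomVar (n k : ℕ) : ℝ := k * (1 - (k : ℝ) / n)

theorem xi_eq_two_add_sum {n : ℕ} (hn : n ≠ 0) :
    xi n = 2 + ∑ k ∈ Ioo 0 n, binomAtMean n k := by
  have h0 : binomAtMean n 0 = 1 := by simp [binomAtMean]
  have hn' : binomAtMean n n = 1 := by simp [binomAtMean, hn]
  change ∑ k ∈ range (n + 1), binomAtMean n k = _
  rw [sum_range_succ, range_eq_Ico, sum_eq_sum_Ico_succ_bot (pos_of_ne_zero hn),
    Ico_add_one_left_eq_Ioo, h0, hn']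
  ring

theorem binomAtMean_eq {n k : ℕ} (hk : k ≠ 0) (hkn : k < n) :
    binomAtMean n k =
      stirlingSeq n / (stirlingSeq k * stirlingSeq (n - k)) / √(2 * binomVar n k) := by
  obtain ⟨j, rfl⟩ : ∃ j, n = k + j := ⟨n - k, by omega⟩
  have hj : j ≠ 0 := by omega
  have hk' : (0 : ℝ) < k := by positivity
  have hj' : (0 : ℝ) < j := by positivity
  have hσk := stirlingSeq_pos_of_ne_zero hk
  have hσj := stirlingSeq_pos_of_ne_zero hj
  have hsqrt : √(2 * (k + j : ℝ)) * √(2 * k * j / (k + j)) = √(2 * k) * √(2 * j) := by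
    rw [← sqrt_mul (by positivity), ← sqrt_mul (by positivity)]
    congr 1
    field_simp
  have hsub : 1 - (k : ℝ) / (k + j) = j / (k + j) := by field_simp; ring
  simp only [binomAtMean, binomVar, Nat.add_sub_cancel_left]
  push_cast
  rw [hsub, Nat.cast_add_choose, factorial_eq_stirlingSeq_mul hk, factorial_eq_stirlingSeq_mul hj,
    factorial_eq_stirlingSeq_mul (by omega)]
  push_cast
  simp only [div_pow]
  field_simp
  linear_combination
    stirlingSeq (k + j) * (k + j : ℝ) ^ k * (k + j : ℝ) ^ j * exp 1 ^ k * exp 1 ^ j * hsqrt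

theorem le_binomAtMean {n k : ℕ} (hk : k ≠ 0) (hkn : k < n) :
    √(2 * π) / exp 1 ^ 2 / √(binomVar n k) ≤ binomAtMean n k := by
  rw [binomAtMean_eq hk hkn, sqrt_mul zero_le_two (binomVar n k), ← div_div (_ / _)]
  exact div_le_div_of_nonneg_right (sqrt_two_pi_div_exp_sq_le_stirlingSeq_div hk hkn)
    (sqrt_nonneg _)

theorem binomAtMean_le {n k : ℕ} (hk : k ≠ 0) (hkn : k < n) :
    binomAtMean n k ≤ exp 1 / (2 * π) / √(binomVar n k) := by
  rw [binomAtMean_eq hk hkn, sqrt_mul zero_le_two (binomVar n k), ← div_div (_ / _)]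
  exact div_le_div_of_nonneg_right (stirlingSeq_div_le_exp_one_div_two_pi hk hkn) (sqrt_nonneg _)

theorem one_add_half_le_inv_sqrt_one_sub {t : ℝ} (ht0 : 0 ≤ t) (ht1 : t < 1) :
    1 + t / 2 ≤ (√(1 - t))⁻¹ := by
  rw [← sqrt_inv, ← one_div]
  apply le_sqrt_of_sq_le
  rw [le_div_iff₀ (by linarith)]
  nlinarith [mul_nonneg ht0 ht0, mul_nonneg (mul_nonneg ht0 ht0) ht0]

theorem inv_sqrt_one_sub_le_one_add {t : ℝ} (ht0 : 0 ≤ t) (ht : t ≤ 1 / 2) :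
    (√(1 - t))⁻¹ ≤ 1 + t := by
  rw [← sqrt_inv, ← one_div, sqrt_le_left (by linarith), div_le_iff₀ (by linarith)]
  nlinarith [mul_nonneg ht0 ht0, mul_nonneg (mul_nonneg ht0 ht0) ht0]

theorem inv_sqrt_add_le_inv_sqrt_mul_one_sub {x y : ℝ} (hx : 0 < x) (hxy : x < y) :
    (√x)⁻¹ + √x / (2 * y) ≤ (√(x * (1 - x / y)))⁻¹ := by
  have hy : 0 < y := hx.trans hxy
  have key := one_add_half_le_inv_sqrt_one_sub (div_nonneg hx.le hy.le) ((div_lt_one hy).2 hxy)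
  have hsx : √x / (2 * y) = (√x)⁻¹ * (x / y / 2) := by
    field_simp
    rw [sq_sqrt hx.le]
  rw [sqrt_mul hx.le, mul_inv, hsx, ← mul_one_add]
  exact mul_le_mul_of_nonneg_left (by linarith) (by positivity)

theorem inv_sqrt_mul_one_sub_le {x y : ℝ} (hx : 0 < x) (hxy : 2 * x ≤ y) :
    (√(x * (1 - x / y)))⁻¹ ≤ (√x)⁻¹ + √x / y := by
  have hy : 0 < y := by linarith
  have key := inv_sqrt_one_sub_le_one_add (div_nonneg hx.le hy.le)
    (by rw [div_le_iff₀ hy]; linarith)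
  have hsx : √x / y = (√x)⁻¹ * (x / y) := by
    field_simp
    rw [sq_sqrt hx.le]
  rw [sqrt_mul hx.le, mul_inv, hsx, ← mul_one_add]
  exact mul_le_mul_of_nonneg_left key (by positivity)

theorem sum_Ioc_le_sub_of_le {f F : ℕ → ℝ} {a m : ℕ} (ham : a ≤ m)
    (h : ∀ k, f (k + 1) ≤ F (k + 1) - F k) : ∑ k ∈ Ioc a m, f k ≤ F m - F a := by
  induction m, ham using Nat.le_induction with
  | base => simp
  | succ m ham ih => rw [sum_Ioc_succ_top ham]; linarith [h m]

theorem sub_le_sum_Ioc_of_le {f F : ℕ → ℝ} {a m : ℕ} (ham : a ≤ m)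
    (h : ∀ k, F (k + 1) - F k ≤ f (k + 1)) : F m - F a ≤ ∑ k ∈ Ioc a m, f k := by
  have := sum_Ioc_le_sub_of_le (f := fun k ↦ -f k) (F := fun k ↦ -F k) ham
    (fun k ↦ by linarith [h k])
  rw [sum_neg_distrib] at this
  linarith

theorem sqrt_add_one_sub_sqrt_le {x : ℝ} (hx : 0 < x) : √(x + 1) - √x ≤ (√x)⁻¹ / 2 := by
  have ha := sq_sqrt (show 0 ≤ x + 1 by linarith)
  have hb := sq_sqrt hx.le
  rw [← one_div, div_div, le_div_iff₀ (by positivity)]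
  nlinarith [sq_nonneg (√(x + 1) - √x)]

theorem inv_sqrt_add_one_div_two_le {x : ℝ} (hx : 0 ≤ x) : (√(x + 1))⁻¹ / 2 ≤ √(x + 1) - √x := by
  have ha := sq_sqrt (show 0 ≤ x + 1 by linarith)
  have hb := sq_sqrt hx
  have : 0 < √(x + 1) := sqrt_pos.2 (by linarith)
  rw [← one_div, div_div, div_le_iff₀ (by positivity)]
  nlinarith [sq_nonneg (√(x + 1) - √x), sqrt_nonneg x]

theorem mul_sqrt_add_one_sub_mul_sqrt_mem {x : ℝ} (hx : 0 ≤ x) :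
    (x + 1) * √(x + 1) - x * √x ∈ Set.Icc (3 / 2 * √x) (3 / 2 * √(x + 1)) := by
  have ha := sq_sqrt (show 0 ≤ x + 1 by linarith)
  have hb := sq_sqrt hx
  have hab : √x ≤ √(x + 1) := sqrt_le_sqrt (by linarith)
  have hb0 := sqrt_nonneg x
  constructor
  · nlinarith [mul_nonneg (sub_nonneg.2 hab) (by positivity : 0 ≤ 2 * √(x + 1) + √x)]
  · nlinarith [mul_nonneg (sub_nonneg.2 hab) (by positivity : 0 ≤ √(x + 1) + 2 * √x)]

theorem two_mul_sqrt_sub_two_le_sum_inv_sqrt (m : ℕ) :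
    2 * √(m + 1) - 2 ≤ ∑ k ∈ Ioc 0 m, (√k)⁻¹ := by
  have := sub_le_sum_Ioc_of_le (f := fun k : ℕ ↦ (√k)⁻¹) (F := fun k : ℕ ↦ 2 * √(k + 1))
    (Nat.zero_le m) fun k ↦ by
      have := sqrt_add_one_sub_sqrt_le (x := k + 1) (by positivity)
      push_cast
      linarith
  simpa using this

theorem sum_inv_sqrt_le {m : ℕ} (hm : m ≠ 0) : ∑ k ∈ Ioc 0 m, (√k)⁻¹ ≤ 2 * √m - 1 := by
  have := sum_Ioc_le_sub_of_le (f := fun k : ℕ ↦ (√k)⁻¹) (F := fun k : ℕ ↦ 2 * √k)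
    (Nat.one_le_iff_ne_zero.2 hm) fun k ↦ by
      have := inv_sqrt_add_one_div_two_le (x := k) (by positivity)
      push_cast
      linarith
  rw [← sum_Ioc_consecutive _ zero_le_one (Nat.one_le_iff_ne_zero.2 hm),
    show Ioc 0 1 = {1} by rfl, sum_singleton]
  simp only [Nat.cast_one, sqrt_one, inv_one, mul_one] at this ⊢
  linarith

theorem two_thirds_mul_le_sum_sqrt (m : ℕ) : 2 / 3 * (m * √m) ≤ ∑ k ∈ Ioc 0 m, √k := by
  have := sub_le_sum_Ioc_of_le (f := fun k : ℕ ↦ √k) (F := fun k : ℕ ↦ 2 / 3 * (k * √k))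
    (Nat.zero_le m) fun k ↦ by
      have := (mul_sqrt_add_one_sub_mul_sqrt_mem (x := k) (by positivity)).2
      push_cast
      linarith
  simpa using this

theorem sum_sqrt_le (m : ℕ) : ∑ k ∈ Ioc 0 m, √k ≤ 2 / 3 * ((m + 1) * √(m + 1) - 1) := by
  have := sum_Ioc_le_sub_of_le (f := fun k : ℕ ↦ √k) (F := fun k : ℕ ↦ 2 / 3 * ((k + 1) * √(k + 1)))
    (Nat.zero_le m) fun k ↦ by
      have := (mul_sqrt_add_one_sub_mul_sqrt_mem (x := k + 1) (by positivity)).1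
      push_cast
      linarith
  simp only [CharP.cast_eq_zero, zero_add, sqrt_one, mul_one] at this
  linarith

theorem binomVar_sub_self {n k : ℕ} (hkn : k ≤ n) : binomVar n (n - k) = binomVar n k := by
  rcases eq_or_ne n 0 with rfl | hn
  · rw [Nat.le_zero.1 hkn]
  · have hn' : (n : ℝ) ≠ 0 := by exact_mod_cast hn
    simp only [binomVar, Nat.cast_sub hkn]
    field_simp
    ring

theorem sum_Ioo_eq_sum_Ioc_add_sum_Ioc {M : Type*} [AddCommMonoid M] (n : ℕ) (f : ℕ → M)
    (hf : ∀ k ≤ n, f (n - k) = f k) :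
    ∑ k ∈ Ioo 0 n, f k = ∑ k ∈ Ioc 0 (n / 2), f k + ∑ k ∈ Ioc 0 ((n - 1) / 2), f k := by
  rw [← Ioc_sub_one_right_eq_Ioo,
    ← sum_Ioc_consecutive _ (Nat.zero_le _) (by omega : n / 2 ≤ n - 1)]
  congr 1
  refine sum_nbij' (n - ·) (n - ·) ?_ ?_ ?_ ?_ ?_ <;>
    intro k hk <;> simp only [mem_Ioc] at hk ⊢
  any_goals omega
  exact (hf k (by omega)).symm

theorem le_sum_inv_sqrt_binomVar {n m : ℕ} (hmn : m < n) :
    2 * √(m + 1) - 2 + m * √m / (3 * n) ≤ ∑ k ∈ Ioc 0 m, (√(binomVar n k))⁻¹ := by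
  calc 2 * √(m + 1) - 2 + m * √m / (3 * n)
      ≤ ∑ k ∈ Ioc 0 m, (√k)⁻¹ + (∑ k ∈ Ioc 0 m, √k) / (2 * n) := by
        have := div_le_div_of_nonneg_right (two_thirds_mul_le_sum_sqrt m)
          (by positivity : (0 : ℝ) ≤ 2 * n)
        have : 2 / 3 * (m * √m) / (2 * n) = m * √m / (3 * n) := by ring
        linarith [two_mul_sqrt_sub_two_le_sum_inv_sqrt m]
    _ ≤ _ := by
        rw [sum_div, ← sum_add_distrib]
        refine sum_le_sum fun k hk ↦ ?_
        rw [mem_Ioc] at hk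
        exact inv_sqrt_add_le_inv_sqrt_mul_one_sub (by exact_mod_cast hk.1)
          (by exact_mod_cast hk.2.trans_lt hmn)

theorem sum_inv_sqrt_binomVar_le {n m : ℕ} (hm : m ≠ 0) (hmn : 2 * m ≤ n) :
    ∑ k ∈ Ioc 0 m, (√(binomVar n k))⁻¹ ≤ 2 * √m - 1 + 2 / 3 * ((m + 1) * √(m + 1) - 1) / n := by
  calc ∑ k ∈ Ioc 0 m, (√(binomVar n k))⁻¹
      ≤ ∑ k ∈ Ioc 0 m, ((√k)⁻¹ + √k / n) := by
        refine sum_le_sum fun k hk ↦ ?_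
        rw [mem_Ioc] at hk
        exact inv_sqrt_mul_one_sub_le (by exact_mod_cast hk.1)
          (by exact_mod_cast (by omega : 2 * k ≤ n))
    _ ≤ _ := by
        rw [sum_add_distrib, ← sum_div]
        have := div_le_div_of_nonneg_right (sum_sqrt_le m) (Nat.cast_nonneg (α := ℝ) n)
        linarith [sum_inv_sqrt_le hm]

theorem sqrt_le_two_add_of_le_two_mul_add_two {n m : ℕ} (hn : n ≠ 0) (hm : n ≤ 2 * m + 2) :
    √n ≤ 2 + 0.6784 * (2 * √(m + 1) - 2 + m * √m / (3 * n)) := by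
  have hn1 : (1 : ℝ) ≤ n := by exact_mod_cast Nat.one_le_iff_ne_zero.2 hn
  have hm' : (n : ℝ) ≤ 2 * m + 2 := by exact_mod_cast hm
  have hs := sq_sqrt (show (0 : ℝ) ≤ n by positivity)
  have hr := sq_sqrt (show (0 : ℝ) ≤ m by positivity)
  have hs1 : 1 ≤ √(n : ℝ) := one_le_sqrt.2 hn1
  have hr0 := sqrt_nonneg (m : ℝ)
  have hq : 0.7071 * √(n : ℝ) ≤ √((m : ℝ) + 1) := le_sqrt_of_sq_le (by nlinarith)
  -- `x ↦ x^(3/2)` lies above its tangent at `x = n/4`: `(√m - √n/2)² (2√m + √n/2) ≥ 0`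
  have htangent : 5 / 16 * √(n : ℝ) ^ 3 - 3 / 4 * √(n : ℝ) ^ 2 ≤ m * √m := by
    nlinarith [mul_nonneg (sq_nonneg (√(m : ℝ) - √(n : ℝ) / 2))
      (by positivity : 0 ≤ 2 * √(m : ℝ) + √(n : ℝ) / 2)]
  have hX : 5 / 48 * √(n : ℝ) - 1 / 4 ≤ m * √m / (3 * n) := by
    rw [le_div_iff₀ (by positivity)]
    nlinarith [congrArg (· * √(n : ℝ)) hs]
  nlinarith

theorem two_add_le_two_mul_sqrt_of_two_mul_le {n m : ℕ} (hn : 8 ≤ n) (hm : 2 * m ≤ n) :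
    2 + 0.866 * (2 * √m - 1 + 2 / 3 * ((m + 1) * √(m + 1) - 1) / n) ≤ 2 * √n := by
  have hn8 : (8 : ℝ) ≤ n := by exact_mod_cast hn
  have hm' : 2 * (m : ℝ) ≤ n := by exact_mod_cast hm
  have hs := sq_sqrt (show (0 : ℝ) ≤ n by positivity)
  have hs8 : 2.828 ≤ √(n : ℝ) := le_sqrt_of_sq_le (by nlinarith)
  have hr : √(m : ℝ) ≤ 0.70711 * √n := by
    rw [sqrt_le_left (by positivity)]; nlinarith
  have hq : √((m : ℝ) + 1) ≤ 0.79057 * √n := by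
    rw [sqrt_le_left (by positivity)]; nlinarith
  have hq' : ((m : ℝ) + 1) * √(m + 1) ≤ 0.625 * n * (0.79057 * √n) :=
    mul_le_mul (by linarith) hq (sqrt_nonneg _) (by positivity)
  have hX : 2 / 3 * (((m : ℝ) + 1) * √(m + 1) - 1) / n ≤ 0.32941 * √n := by
    rw [div_le_iff₀ (by positivity)]
    nlinarith [sqrt_nonneg (n : ℝ)]
  nlinarith

theorem xi_le_two_mul_sqrt_of_le_seven {n : ℕ} (hn : 0 < n) (h7 : n ≤ 7) : xi n ≤ 2 * √n := by
  rw [← div_le_iff₀' two_pos]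
  apply le_sqrt_of_sq_le
  interval_cases n <;> norm_num [xi, sum_range_succ, Nat.choose]

theorem sum_Ioo_inv_sqrt_binomVar_eq (n : ℕ) :
    ∑ k ∈ Ioo 0 n, (√(binomVar n k))⁻¹ =
      ∑ k ∈ Ioc 0 (n / 2), (√(binomVar n k))⁻¹ + ∑ k ∈ Ioc 0 ((n - 1) / 2), (√(binomVar n k))⁻¹ :=
  sum_Ioo_eq_sum_Ioc_add_sum_Ioc n _ fun _ hk ↦ by rw [binomVar_sub_self hk]

theorem sum_Ioc_inv_sqrt_binomVar_le_of_le (n : ℕ) {a b : ℕ} (hab : a ≤ b) :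
    ∑ k ∈ Ioc 0 a, (√(binomVar n k))⁻¹ ≤ ∑ k ∈ Ioc 0 b, (√(binomVar n k))⁻¹ :=
  sum_le_sum_of_subset_of_nonneg (Ioc_subset_Ioc_right hab) fun _ _ _ ↦ by positivity

theorem sqrt_le_xi {n : ℕ} (hn : n ≠ 0) : √n ≤ xi n := by
  set m := (n - 1) / 2
  set L : ℝ := 2 * √((m : ℝ) + 1) - 2 + m * √m / (3 * n)
  have hL : 0 ≤ L := by
    have : 1 ≤ √((m : ℝ) + 1) := one_le_sqrt.2 (by linarith [m.cast_nonneg (α := ℝ)])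
    have : 0 ≤ (m : ℝ) * √m / (3 * n) := by positivity
    linarith
  have hsum : L ≤ ∑ k ∈ Ioc 0 m, (√(binomVar n k))⁻¹ := le_sum_inv_sqrt_binomVar (by omega)
  calc √n ≤ 2 + 0.3392 * (2 * L) := by
        linarith [sqrt_le_two_add_of_le_two_mul_add_two hn (by omega : n ≤ 2 * m + 2)]
    _ ≤ 2 + √(2 * π) / exp 1 ^ 2 * (2 * ∑ k ∈ Ioc 0 m, (√(binomVar n k))⁻¹) := by
        gcongr
        exact le_sqrt_two_pi_div_exp_sq
    _ ≤ 2 + √(2 * π) / exp 1 ^ 2 * ∑ k ∈ Ioo 0 n, (√(binomVar n k))⁻¹ := by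
        rw [sum_Ioo_inv_sqrt_binomVar_eq]
        gcongr
        linarith [sum_Ioc_inv_sqrt_binomVar_le_of_le n (by omega : m ≤ n / 2)]
    _ ≤ 2 + ∑ k ∈ Ioo 0 n, binomAtMean n k := by
        rw [mul_sum]
        gcongr with k hk
        rw [mem_Ioo] at hk
        exact (div_eq_mul_inv _ _).symm.trans_le (le_binomAtMean hk.1.ne' hk.2)
    _ = xi n := (xi_eq_two_add_sum hn).symm

theorem xi_le_two_mul_sqrt {n : ℕ} (hn : n ≠ 0) : xi n ≤ 2 * √n := by
  rcases le_or_gt n 7 with h7 | h8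
  · exact xi_le_two_mul_sqrt_of_le_seven (by omega) h7
  set m := n / 2
  have hsum := sum_inv_sqrt_binomVar_le (by omega : m ≠ 0) (by omega : 2 * m ≤ n)
  calc xi n = 2 + ∑ k ∈ Ioo 0 n, binomAtMean n k := xi_eq_two_add_sum hn
    _ ≤ 2 + exp 1 / (2 * π) * ∑ k ∈ Ioo 0 n, (√(binomVar n k))⁻¹ := by
        rw [mul_sum]
        gcongr with k hk
        rw [mem_Ioo] at hk
        exact (binomAtMean_le hk.1.ne' hk.2).trans_eq (div_eq_mul_inv _ _)
    _ ≤ 2 + 0.433 * (2 * ∑ k ∈ Ioc 0 m, (√(binomVar n k))⁻¹) := by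
        rw [sum_Ioo_inv_sqrt_binomVar_eq]
        gcongr
        · exact exp_one_div_two_pi_le
        · linarith [sum_Ioc_inv_sqrt_binomVar_le_of_le n (by omega : (n - 1) / 2 ≤ m)]
    _ ≤ 2 + 0.866 * (2 * √m - 1 + 2 / 3 * ((m + 1) * √(m + 1) - 1) / n) := by linarith
    _ ≤ 2 * √n := two_add_le_two_mul_sqrt_of_two_mul_le (by omega) (by omega)

/-- `√n ≤ ξ(n) ≤ 2√n` for all `n ≥ 1`. -/
theorem xi_bounds (n : ℕ) (hn : 1 ≤ n) :
    Real.sqrt n ≤ xi n ∧ xi n ≤ 2 * Real.sqrt n :=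
  ⟨sqrt_le_xi (by omega), xi_le_two_mul_sqrt (by omega)⟩
end

section
/- (Chernoff bound for the empirical mean via kl) For i.i.d. {0,1}-valued (more generally [0,1]-valued) random variables Z₁,…,Z_n with mean p and empirical mean p̂, for any δ ∈ (0,1), with probability at least 1−δ: kl(p̂ ‖ p) ≤ ln(2√n/δ)/n. -/
/-!
Chernoff's method. By convexity of `exp`, the moment generating function of a `[0,1]`-valued
variable with mean `p` is dominated by that of a Bernoulli(`p`) variable, and optimising the
exponential Markov inequality over the exponent gives `P(p̂ ≥ q) ≤ exp (-n kl(q‖p))` for `q ≥ p`.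
Since `kl(·‖p)` is continuous, the event `{kl(p̂‖p) > ε, p̂ ≥ p}` lies in `{p̂ ≥ q}` for the least
`q ≥ p` with `kl(q‖p) ≥ ε`; together with the same bound for `1 - Z` this gives
`P(kl(p̂‖p) > ε) ≤ 2 exp(-nε)`, which for `ε = ln(2√n/δ)/n` equals `δ/√n ≤ δ`.
-/

open MeasureTheory Finset

open Real ProbabilityTheory Filter Topology

lemma klBer_one_sub_one_sub (x p : ℝ) : klBer (1 - x) (1 - p) = klBer x p := by
  simp only [klBer, sub_sub_cancel]
  ring

lemma klBer_one_left (p : ℝ) : klBer 1 p = -log p := by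
  simp [klBer]

lemma klBer_zero_right_nonpos {x : ℝ} (hx : x ∈ Set.Icc 0 1) : klBer x 0 ≤ 0 := by
  simp only [klBer, div_zero, log_zero, mul_zero, sub_zero, div_one, zero_add]
  exact mul_nonpos_of_nonneg_of_nonpos (by linarith [hx.2])
    (log_nonpos (by linarith [hx.2]) (by linarith [hx.1]))

lemma continuous_mul_log_div (c : ℝ) : Continuous fun x : ℝ => x * log (x / c) := by
  rcases eq_or_ne c 0 with rfl | hc
  · simpa using continuous_const
  · have : (fun x : ℝ => x * log (x / c)) = fun x => c * (x / c * log (x / c)) := by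
      funext x
      field_simp
    rw [this]
    exact continuous_const.mul (continuous_mul_log.comp (continuous_id.div_const c))

lemma continuous_klBer_left (p : ℝ) : Continuous (klBer · p) :=
  (continuous_mul_log_div p).add
    ((continuous_mul_log_div (1 - p)).comp (continuous_const.sub continuous_id))

/-- The exponential Markov bound `e^{-tq} 𝔼[e^{tZ}]` on `P(Z ≥ q)` for `Z ~ Bernoulli(p)`. -/
noncomputable def chernoffBer (p q t : ℝ) : ℝ := exp (-(t * q)) * (1 - p + p * exp t)

lemma exists_chernoffBer_eq_exp_neg_klBer {p q : ℝ} (hp : 0 < p) (hpq : p ≤ q) (hq : q < 1) :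
    ∃ t, 0 ≤ t ∧ chernoffBer p q t = exp (-klBer q p) := by
  have h1q : 0 < 1 - q := by linarith
  set L := log ((1 - p) / (1 - q))
  -- the minimiser `t = log (q (1 - p) / (p (1 - q)))` of `chernoffBer p q`
  refine ⟨log (q / p) + L, add_nonneg (log_nonneg ((one_le_div hp).2 hpq))
    (log_nonneg ((one_le_div h1q).2 (by linarith))), ?_⟩
  have hmgf : 1 - p + p * exp (log (q / p) + L) = exp L := by
    rw [exp_add, exp_log (div_pos (hp.trans_le hpq) hp), exp_log (div_pos (by linarith) h1q)]
    field_simp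
    ring
  have hkl : klBer q p = q * log (q / p) - (1 - q) * L := by
    rw [klBer, ← inv_div (1 - p), log_inv]
    ring
  rw [chernoffBer, hmgf, ← exp_add, hkl]
  ring_nf

lemma tendsto_chernoffBer_one (p : ℝ) : Tendsto (chernoffBer p 1) atTop (𝓝 p) := by
  have : chernoffBer p 1 = fun t => (1 - p) * exp (-t) + p := by
    funext t
    rw [chernoffBer, mul_one, mul_add, mul_left_comm, ← exp_add, neg_add_cancel, exp_zero]
    ring
  rw [this]
  simpa using (tendsto_exp_neg_atTop_nhds_zero.const_mul (1 - p)).add_const p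

lemma le_exp_neg_mul_klBer_of_forall_le_chernoffBer_pow {p q x : ℝ} (n : ℕ) (hp : 0 ≤ p)
    (hpq : p ≤ q) (hq : q ≤ 1) (h : ∀ t, 0 ≤ t → x ≤ chernoffBer p q t ^ n) :
    x ≤ exp (-(n * klBer q p)) := by
  rcases hp.eq_or_lt with rfl | hp
  -- `klBer q 0 ≤ 0` because `log (q / 0) = 0`, so the trivial exponent `t = 0` suffices
  · calc x ≤ chernoffBer 0 q 0 ^ n := h 0 le_rfl
      _ = 1 := by simp [chernoffBer]
      _ ≤ _ := one_le_exp (by nlinarith [klBer_zero_right_nonpos ⟨hpq, hq⟩])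
  rcases hq.eq_or_lt with rfl | hq
  -- at `q = 1` the optimal bound `p = exp (-klBer 1 p)` is only reached as `t → ∞`
  · calc x ≤ p ^ n :=
          ge_of_tendsto ((tendsto_chernoffBer_one p).pow n) (eventually_atTop.2 ⟨0, h⟩)
      _ = _ := by rw [klBer_one_left, mul_neg, neg_neg, exp_nat_mul, exp_log hp]
  · obtain ⟨t, ht, heq⟩ := exists_chernoffBer_eq_exp_neg_klBer hp hpq hq
    calc x ≤ chernoffBer p q t ^ n := h t ht
      _ = _ := by rw [heq, ← exp_nat_mul, mul_neg]

section EmpiricalMean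

variable {Ω : Type*} {f : Ω → ℝ}

noncomputable def empiricalMean {n : ℕ} (f : Ω → ℝ) (ω : Fin n → Ω) : ℝ :=
  (n : ℝ)⁻¹ * ∑ i, f (ω i)

lemma sum_comp_mem_Icc (hb : ∀ x, f x ∈ Set.Icc 0 1) {n : ℕ} (ω : Fin n → Ω) :
    ∑ i, f (ω i) ∈ Set.Icc 0 (n : ℝ) :=
  ⟨sum_nonneg fun i _ => (hb (ω i)).1,
    (sum_le_sum fun i (_ : i ∈ univ) => (hb (ω i)).2).trans_eq (by simp)⟩

lemma empiricalMean_mem_Icc (hb : ∀ x, f x ∈ Set.Icc 0 1) {n : ℕ} (ω : Fin n → Ω) :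
    empiricalMean f ω ∈ Set.Icc 0 1 := by
  refine ⟨mul_nonneg (by positivity) (sum_comp_mem_Icc hb ω).1, ?_⟩
  calc empiricalMean f ω ≤ (n : ℝ)⁻¹ * n :=
        mul_le_mul_of_nonneg_left (sum_comp_mem_Icc hb ω).2 (by positivity)
    _ ≤ 1 := by
        rcases n.eq_zero_or_pos with rfl | hn
        · simp
        · rw [inv_mul_cancel₀ (by positivity)]

lemma empiricalMean_one_sub {n : ℕ} (hn : 0 < n) (ω : Fin n → Ω) :
    empiricalMean (fun x => 1 - f x) ω = 1 - empiricalMean f ω := by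
  simp only [empiricalMean, sum_sub_distrib, sum_const, card_univ, Fintype.card_fin, nsmul_eq_mul,
    mul_one, mul_sub, inv_mul_cancel₀ (Nat.cast_pos.2 hn : (0 : ℝ) < n).ne']

variable [MeasurableSpace Ω] {ν : Measure Ω} [IsProbabilityMeasure ν]

lemma mgf_le_one_sub_add_mul_exp (hm : Measurable f) (hb : ∀ x, f x ∈ Set.Icc 0 1) (t : ℝ) :
    mgf f ν t ≤ 1 - ν[f] + ν[f] * exp t := by
  have hf : Integrable f ν := .of_mem_Icc 0 1 hm.aemeasurable (ae_of_all _ hb)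
  have hf' : Integrable (fun x => 1 - f x) ν := (integrable_const 1).sub hf
  -- convexity of `exp` on the segment `[0, t]`
  have hconv (x : Ω) : exp (t * f x) ≤ 1 - f x + f x * exp t := by
    have := convexOn_exp.2 (Set.mem_univ 0) (Set.mem_univ t) (sub_nonneg.2 (hb x).2) (hb x).1
      (sub_add_cancel 1 (f x))
    simpa [mul_comm] using this
  calc mgf f ν t ≤ ∫ x, 1 - f x + f x * exp t ∂ν :=
        integral_mono (integrable_exp_mul_of_mem_Icc hm.aemeasurable (ae_of_all _ hb))
          (hf'.add (hf.mul_const _)) hconv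
    _ = 1 - ν[f] + ν[f] * exp t := by
        rw [integral_add hf' (hf.mul_const _), integral_sub (integrable_const 1) hf,
          integral_mul_const, integral_const, probReal_univ, one_smul]

lemma mgf_sum_pi {ι : Type*} [Fintype ι] (hm : Measurable f) (t : ℝ) :
    mgf (fun ω : ι → Ω => ∑ i, f (ω i)) (Measure.pi fun _ => ν) t =
      mgf f ν t ^ Fintype.card ι := by
  have := (iIndepFun_pi (μ := fun _ : ι => ν) (X := fun _ => f) fun _ => hm.aemeasurable).mgf_sum
    (fun i => hm.comp (measurable_pi_apply i)) univ (t := t)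
  rw [Finset.sum_fn] at this
  rw [this, ← card_univ, ← prod_const]
  exact prod_congr rfl fun i _ =>
    integral_comp_eval (μ := fun _ : ι => ν) (hm.const_mul t).exp.aestronglyMeasurable

lemma measureReal_sum_ge_le (hm : Measurable f) (hb : ∀ x, f x ∈ Set.Icc 0 1) (n : ℕ) (s : ℝ)
    {t : ℝ} (ht : 0 ≤ t) :
    (Measure.pi fun _ : Fin n => ν).real {ω | s ≤ ∑ i, f (ω i)} ≤
      exp (-t * s) * (1 - ν[f] + ν[f] * exp t) ^ n := by
  calc _ ≤ exp (-t * s) * mgf (fun ω : Fin n → Ω => ∑ i, f (ω i)) (Measure.pi fun _ => ν) t :=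
        measure_ge_le_exp_mul_mgf s ht (integrable_exp_mul_of_mem_Icc
          (Measurable.aemeasurable (by fun_prop)) (ae_of_all _ (sum_comp_mem_Icc hb)))
    _ = exp (-t * s) * mgf f ν t ^ n := by rw [mgf_sum_pi hm, Fintype.card_fin]
    _ ≤ _ := by gcongr; exacts [mgf_nonneg, mgf_le_one_sub_add_mul_exp hm hb t]

theorem measureReal_empiricalMean_ge_le (hm : Measurable f) (hb : ∀ x, f x ∈ Set.Icc 0 1)
    {n : ℕ} (hn : 0 < n) {q : ℝ} (hpq : ν[f] ≤ q) (hq : q ≤ 1) :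
    (Measure.pi fun _ : Fin n => ν).real {ω | q ≤ empiricalMean f ω} ≤
      exp (-(n * klBer q ν[f])) := by
  refine le_exp_neg_mul_klBer_of_forall_le_chernoffBer_pow n (integral_nonneg fun x => (hb x).1)
    hpq hq fun t ht => ?_
  calc _ = (Measure.pi fun _ : Fin n => ν).real {ω | n * q ≤ ∑ i, f (ω i)} := by
        simp_rw [empiricalMean, le_inv_mul_iff₀ (Nat.cast_pos.2 hn : (0 : ℝ) < n)]
    _ ≤ exp (-t * (n * q)) * (1 - ν[f] + ν[f] * exp t) ^ n := measureReal_sum_ge_le hm hb n _ ht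
    _ = chernoffBer ν[f] q t ^ n := by
        rw [chernoffBer, mul_pow, ← exp_nat_mul]
        ring_nf

lemma measureReal_klBer_gt_and_ge_le (hm : Measurable f) (hb : ∀ x, f x ∈ Set.Icc 0 1)
    {n : ℕ} (hn : 0 < n) (ε : ℝ) :
    (Measure.pi fun _ : Fin n => ν).real
      {ω | ε < klBer (empiricalMean f ω) ν[f] ∧ ν[f] ≤ empiricalMean f ω} ≤ exp (-(n * ε)) := by
  set S := Set.Icc ν[f] 1 ∩ {x | ε ≤ klBer x ν[f]}
  rcases S.eq_empty_or_nonempty with hS | hS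
  · have : {ω : Fin n → Ω | ε < klBer (empiricalMean f ω) ν[f] ∧ ν[f] ≤ empiricalMean f ω} = ∅ :=
      Set.eq_empty_of_forall_notMem fun ω h =>
        hS.subset ⟨⟨h.2, (empiricalMean_mem_Icc hb ω).2⟩, h.1.le⟩
    rw [this, measureReal_empty]
    positivity
  -- the event lies above the least level `q ≥ ν[f]` at which `klBer · ν[f]` reaches `ε`
  have hSclosed : IsClosed S :=
    isClosed_Icc.inter (isClosed_le continuous_const (continuous_klBer_left _))
  have hSbdd : BddBelow S := ⟨ν[f], fun x hx => hx.1.1⟩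
  obtain ⟨⟨hpq, hq⟩, hεq⟩ := hSclosed.csInf_mem hS hSbdd
  calc _ ≤ (Measure.pi fun _ : Fin n => ν).real {ω | sInf S ≤ empiricalMean f ω} :=
        measureReal_mono fun ω h => csInf_le hSbdd ⟨⟨h.2, (empiricalMean_mem_Icc hb ω).2⟩, h.1.le⟩
    _ ≤ exp (-(n * klBer (sInf S) ν[f])) := measureReal_empiricalMean_ge_le hm hb hn hpq hq
    _ ≤ exp (-(n * ε)) := by gcongr; exact hεq

theorem measureReal_klBer_gt_le (hm : Measurable f) (hb : ∀ x, f x ∈ Set.Icc 0 1)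
    {n : ℕ} (hn : 0 < n) (ε : ℝ) :
    (Measure.pi fun _ : Fin n => ν).real {ω | ε < klBer (empiricalMean f ω) ν[f]} ≤
      2 * exp (-(n * ε)) := by
  have hf : Integrable f ν := .of_mem_Icc 0 1 hm.aemeasurable (ae_of_all _ hb)
  have hmean : ν[fun x => 1 - f x] = 1 - ν[f] := by
    rw [integral_sub (integrable_const 1) hf, integral_const, probReal_univ, one_smul]
  -- the lower tail of `f` is the upper tail of `1 - f`
  have hlower := measureReal_klBer_gt_and_ge_le (ν := ν) (f := fun x => 1 - f x)
    (measurable_const.sub hm) (fun x => ⟨sub_nonneg.2 (hb x).2, sub_le_self 1 (hb x).1⟩) hn ε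
  simp only [hmean, empiricalMean_one_sub hn, klBer_one_sub_one_sub, sub_le_sub_iff_left] at hlower
  calc _ ≤ (Measure.pi fun _ : Fin n => ν).real
          ({ω | ε < klBer (empiricalMean f ω) ν[f] ∧ ν[f] ≤ empiricalMean f ω} ∪
            {ω | ε < klBer (empiricalMean f ω) ν[f] ∧ empiricalMean f ω ≤ ν[f]}) :=
        measureReal_mono fun ω h => (le_total ν[f] (empiricalMean f ω)).imp (⟨h, ·⟩) (⟨h, ·⟩)
    _ ≤ exp (-(n * ε)) + exp (-(n * ε)) :=
        (measureReal_union_le _ _).trans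
          (add_le_add (measureReal_klBer_gt_and_ge_le hm hb hn ε) hlower)
    _ = 2 * exp (-(n * ε)) := (two_mul _).symm

end EmpiricalMean

/-- Chernoff bound via kl: for i.i.d. `[0,1]`-valued random variables with mean
`p` and empirical mean `p̂`, with probability at least `1-δ`,
`kl(p̂ ‖ p) ≤ ln(2√n/δ)/n`. -/
theorem chernoff_kl_bound
    (Ω : Type*) [MeasurableSpace Ω]
    (ν : Measure Ω) [IsProbabilityMeasure ν]
    (f : Ω → ℝ) (hm : Measurable f) (hb : ∀ ω, f ω ∈ Set.Icc (0 : ℝ) 1)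
    (n : ℕ) (hn : 0 < n) (δ : ℝ) (hδ : δ ∈ Set.Ioo (0 : ℝ) 1) :
    1 - ENNReal.ofReal δ ≤
      (Measure.pi fun _ : Fin n => ν)
        {ω | klBer ((n : ℝ)⁻¹ * ∑ i, f (ω i)) (∫ x, f x ∂ν) ≤
          Real.log (2 * Real.sqrt n / δ) / n} := by
  set μ := Measure.pi fun _ : Fin n => ν
  set ε := log (2 * √n / δ) / n
  set bad := {ω : Fin n → Ω | ε < klBer (empiricalMean f ω) ν[f]}
  have hsqrt : 1 ≤ √(n : ℝ) := one_le_sqrt.2 (by exact_mod_cast hn)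
  have htail : 2 * exp (-(n * ε)) ≤ δ := by
    rw [mul_div_cancel₀ _ (by positivity), exp_neg, exp_log (by have := hδ.1; positivity),
      inv_div, ← mul_div_assoc, mul_div_mul_left _ _ two_ne_zero]
    exact div_le_self hδ.1.le hsqrt
  have hbad : μ bad ≤ ENNReal.ofReal δ := by
    rw [← ofReal_measureReal]
    exact ENNReal.ofReal_le_ofReal ((measureReal_klBer_gt_le hm hb hn ε).trans htail)
  calc 1 - ENNReal.ofReal δ ≤ 1 - μ bad := tsub_le_tsub_left hbad 1
    _ ≤ μ badᶜ :=
        tsub_le_iff_left.2 (by simpa only [measure_univ] using measure_univ_le_add_compl (μ := μ) _)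
    _ = _ := by simp [bad, Set.compl_ofPred, empiricalMean]
end

section
/- For binary classification, the C-bound expressed via disagreement and joint error reads: if 2e_ρ + d_ρ < 1 then L(MV_ρ) ≤ 1 − (1 − (2e_ρ + d_ρ))²/(1 − 2d_ρ). -/
/-!
Write `M(x, y) = y · ∑ ρ(h) h(x)` for the margin of the majority vote. For values in `{1, -1}`,
`1[a ≠ y] = (1 - y a)/2` and `1[a ≠ b] = (1 - a b)/2`, so pointwise the `ρ ⊗ ρ`-average of the
joint-error indicator is `(1 - M)²/4` and that of the disagreement indicator is `(1 - M²)/2`.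
Integrating, `1 - (2e + d) = E[M]` and `1 - 2d = E[M²]`, and the C-bound becomes the
second-moment inequality `P(M ≤ 0) ≤ 1 - E[M]²/E[M²]`, which is Cauchy–Schwarz in the form
`E[M]² ≤ E[M 1_{M > 0}]² ≤ E[M²] P(M > 0)`.
-/

open MeasureTheory Finset

section Moments

variable {Ω : Type*} [MeasurableSpace Ω] {μ : Measure Ω} {f : Ω → ℝ}

theorem integral_quadratic [IsFiniteMeasure μ] (hf : MemLp f 2 μ) (a b c : ℝ) :
    ∫ x, (a * f x ^ 2 + b * f x + c) ∂μ =
      a * ∫ x, f x ^ 2 ∂μ + b * ∫ x, f x ∂μ + c * μ.real Set.univ := by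
  have hf1 : Integrable f μ := hf.integrable one_le_two
  have hf2 : Integrable (fun x => f x ^ 2) μ := hf.integrable_sq
  have hlin : Integrable (fun x => a * f x ^ 2 + b * f x) μ :=
    (hf2.const_mul a).add (hf1.const_mul b)
  rw [integral_add hlin (integrable_const c), integral_add (hf2.const_mul a) (hf1.const_mul b),
    integral_const_mul, integral_const_mul, integral_const, smul_eq_mul, mul_comm c]

theorem sq_integral_le_integral_sq_mul_measureReal_univ [IsFiniteMeasure μ]
    (hf : MemLp f 2 μ) :
    (∫ x, f x ∂μ) ^ 2 ≤ (∫ x, f x ^ 2 ∂μ) * μ.real Set.univ := by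
  have hquad : ∀ t : ℝ, 0 ≤ (∫ x, f x ^ 2 ∂μ) * (t * t) + (-2 * ∫ x, f x ∂μ) * t +
      μ.real Set.univ := fun t =>
    calc 0 ≤ ∫ x, (t * f x - 1) ^ 2 ∂μ := integral_nonneg fun x => sq_nonneg _
      _ = ∫ x, ((t * t) * f x ^ 2 + (-2 * t) * f x + 1) ∂μ := by congr 1; ext x; ring
      _ = _ := by rw [integral_quadratic hf]; ring
  have := discrim_le_zero hquad
  rw [discrim] at this
  linarith

theorem measureReal_nonpos_le_one_sub_sq_integral_div [IsProbabilityMeasure μ]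
    (hf : MemLp f 2 μ) (hpos : 0 < ∫ x, f x ∂μ) :
    μ.real {x | f x ≤ 0} ≤ 1 - (∫ x, f x ∂μ) ^ 2 / ∫ x, f x ^ 2 ∂μ := by
  set B := {x | 0 < f x}
  have hB : NullMeasurableSet B μ := nullMeasurableSet_lt aemeasurable_const hf.1.aemeasurable
  have h_pos_part : ∫ x, f x ∂μ ≤ ∫ x in B, f x ∂μ := by
    have : ∫ x in Bᶜ, f x ∂μ ≤ 0 := setIntegral_nonpos_of_ae_restrict <| by
      filter_upwards [ae_restrict_mem₀ hB.compl] with x hx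
      simpa [B] using hx
    linarith [integral_add_compl₀ hB (hf.integrable one_le_two)]
  have h_cs : (∫ x in B, f x ∂μ) ^ 2 ≤ (∫ x in B, f x ^ 2 ∂μ) * μ.real B := by
    simpa only [measureReal_restrict_apply_univ] using
      sq_integral_le_integral_sq_mul_measureReal_univ (hf.restrict B)
  have h_sq_le : ∫ x in B, f x ^ 2 ∂μ ≤ ∫ x, f x ^ 2 ∂μ :=
    setIntegral_le_integral hf.integrable_sq (ae_of_all _ fun x => sq_nonneg _)
  have h_compl : μ.real {x | f x ≤ 0} = 1 - μ.real B := by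
    rw [← probReal_compl_eq_one_sub₀ hB]
    congr 1
    ext x
    simp [B]
  have h_key : (∫ x, f x ∂μ) ^ 2 ≤ (∫ x, f x ^ 2 ∂μ) * μ.real B := by
    calc (∫ x, f x ∂μ) ^ 2 ≤ (∫ x in B, f x ∂μ) ^ 2 := by gcongr
      _ ≤ _ := h_cs.trans (by gcongr)
  have h_sq_pos : 0 < ∫ x, f x ^ 2 ∂μ := by
    by_contra! h
    nlinarith [measureReal_nonneg (μ := μ) (s := B)]
  rw [h_compl, sub_le_sub_iff_left, div_le_iff₀ h_sq_pos, mul_comm]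
  exact h_key

end Moments

theorem sum_sum_mul_measureReal_eq_integral {Ω ι κ : Type*} [MeasurableSpace Ω] {μ : Measure Ω}
    [IsFiniteMeasure μ] [Fintype ι] [Fintype κ] {S : ι → κ → Set Ω}
    (hS : ∀ i j, MeasurableSet (S i j)) (w : ι → κ → ℝ) :
    ∑ i, ∑ j, w i j * μ.real (S i j) = ∫ x, ∑ i, ∑ j, w i j * (S i j).indicator 1 x ∂μ := by
  have hint : ∀ i j, Integrable (fun x => w i j * (S i j).indicator 1 x) μ := fun i j =>
    ((integrable_const 1).indicator (hS i j)).const_mul _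
  rw [integral_finsetSum _ fun i _ => integrable_finsetSum _ fun j _ => hint i j]
  refine sum_congr rfl fun i _ => ?_
  rw [integral_finsetSum _ fun j _ => hint i j]
  refine sum_congr rfl fun j _ => ?_
  rw [integral_const_mul, integral_indicator_one (hS i j)]

section SignedSums

variable {ι : Type*} [Fintype ι] {ρ a : ι → ℝ}

theorem ite_ne_and_ne_eq {y b c : ℝ} (hy : y = 1 ∨ y = -1) (hb : b = 1 ∨ b = -1)
    (hc : c = 1 ∨ c = -1) :
    (if b ≠ y ∧ c ≠ y then 1 else 0 : ℝ) = (1 - y * b) * (1 - y * c) / 4 := by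
  rcases hy with rfl | rfl <;> rcases hb with rfl | rfl <;> rcases hc with rfl | rfl <;> norm_num

theorem ite_ne_eq {b c : ℝ} (hb : b = 1 ∨ b = -1) (hc : c = 1 ∨ c = -1) :
    (if b ≠ c then 1 else 0 : ℝ) = (1 - b * c) / 2 := by
  rcases hb with rfl | rfl <;> rcases hc with rfl | rfl <;> norm_num

theorem sum_sum_mul_ite_ne_and_ne {y : ℝ} (hρ1 : ∑ i, ρ i = 1) (hy : y = 1 ∨ y = -1)
    (ha : ∀ i, a i = 1 ∨ a i = -1) :
    ∑ i, ∑ j, ρ i * ρ j * (if a i ≠ y ∧ a j ≠ y then 1 else 0 : ℝ) =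
      (1 - y * ∑ i, ρ i * a i) ^ 2 / 4 := by
  calc _ = ∑ i, ∑ j, (ρ i - y * (ρ i * a i)) * (ρ j - y * (ρ j * a j)) / 4 :=
        sum_congr rfl fun i _ => sum_congr rfl fun j _ => by
          rw [ite_ne_and_ne_eq hy (ha i) (ha j)]; ring
    _ = (∑ i, ρ i - y * ∑ i, ρ i * a i) * (∑ i, ρ i - y * ∑ i, ρ i * a i) / 4 := by
        rw [mul_sum, ← sum_sub_distrib, sum_mul_sum]
        simp only [sum_div]
    _ = _ := by rw [hρ1]; ring

theorem sum_sum_mul_ite_ne (hρ1 : ∑ i, ρ i = 1) (ha : ∀ i, a i = 1 ∨ a i = -1) :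
    ∑ i, ∑ j, ρ i * ρ j * (if a i ≠ a j then 1 else 0 : ℝ) =
      (1 - (∑ i, ρ i * a i) ^ 2) / 2 := by
  calc _ = ∑ i, ∑ j, (ρ i * ρ j - ρ i * a i * (ρ j * a j)) / 2 :=
        sum_congr rfl fun i _ => sum_congr rfl fun j _ => by
          rw [ite_ne_eq (ha i) (ha j)]; ring
    _ = ((∑ i, ρ i) * ∑ i, ρ i - (∑ i, ρ i * a i) * ∑ i, ρ i * a i) / 2 := by
        simp only [← sum_div, sum_mul_sum, sum_sub_distrib]
    _ = _ := by rw [hρ1]; ring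

end SignedSums

section MajorityVote

variable {X H : Type*} [MeasurableSpace X] [Fintype H] (μ : Measure (X × ℝ))
  (hyp : H → X → ℝ) (ρ : H → ℝ)

def margin (p : X × ℝ) : ℝ := p.2 * ∑ h, ρ h * hyp h p.1

def jointError : ℝ :=
  ∑ h₁, ∑ h₂, ρ h₁ * ρ h₂ * μ.real {p | hyp h₁ p.1 ≠ p.2 ∧ hyp h₂ p.1 ≠ p.2}

def disagreement : ℝ :=
  ∑ h₁, ∑ h₂, ρ h₁ * ρ h₂ * μ.real {p | hyp h₁ p.1 ≠ hyp h₂ p.1}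

variable {μ hyp ρ}

theorem measurable_margin (hmeas : ∀ h, Measurable (hyp h)) : Measurable (margin hyp ρ) := by
  unfold margin
  fun_prop

theorem memLp_margin [IsFiniteMeasure μ] (hmeas : ∀ h, Measurable (hyp h))
    (hval : ∀ h x, hyp h x = 1 ∨ hyp h x = -1) (hlab : ∀ᵐ p ∂μ, p.2 = 1 ∨ p.2 = -1) :
    MemLp (margin hyp ρ) 2 μ := by
  refine MemLp.of_bound (measurable_margin hmeas).aestronglyMeasurable (∑ h, |ρ h|) ?_
  filter_upwards [hlab] with p hp
  have hy : |p.2| = 1 := by rcases hp with hy | hy <;> simp [hy]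
  rw [Real.norm_eq_abs, margin, abs_mul, hy, one_mul]
  refine (abs_sum_le_sum_abs _ _).trans_eq (sum_congr rfl fun h _ => ?_)
  rcases hval h p.1 with hh | hh <;> simp [hh]

theorem jointError_eq [IsProbabilityMeasure μ] (hmeas : ∀ h, Measurable (hyp h))
    (hval : ∀ h x, hyp h x = 1 ∨ hyp h x = -1) (hlab : ∀ᵐ p ∂μ, p.2 = 1 ∨ p.2 = -1)
    (hρ1 : ∑ h, ρ h = 1) :
    jointError μ hyp ρ =
      (∫ p, margin hyp ρ p ^ 2 ∂μ - 2 * ∫ p, margin hyp ρ p ∂μ + 1) / 4 := by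
  have hS : ∀ h₁ h₂, MeasurableSet {p : X × ℝ | hyp h₁ p.1 ≠ p.2 ∧ hyp h₂ p.1 ≠ p.2} :=
    fun h₁ h₂ => by measurability
  rw [jointError, sum_sum_mul_measureReal_eq_integral hS]
  calc _ = ∫ p, ((1 / 4) * margin hyp ρ p ^ 2 + (-1 / 2) * margin hyp ρ p + 1 / 4) ∂μ := by
        refine integral_congr_ae ?_
        filter_upwards [hlab] with p hp
        simp only [Set.indicator_apply, Set.mem_ofPred_eq, Pi.one_apply]
        rw [sum_sum_mul_ite_ne_and_ne hρ1 hp fun h => hval h p.1, margin]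
        ring
    _ = _ := by
        rw [integral_quadratic (memLp_margin hmeas hval hlab), probReal_univ]
        ring

theorem disagreement_eq [IsProbabilityMeasure μ] (hmeas : ∀ h, Measurable (hyp h))
    (hval : ∀ h x, hyp h x = 1 ∨ hyp h x = -1) (hlab : ∀ᵐ p ∂μ, p.2 = 1 ∨ p.2 = -1)
    (hρ1 : ∑ h, ρ h = 1) :
    disagreement μ hyp ρ = (1 - ∫ p, margin hyp ρ p ^ 2 ∂μ) / 2 := by
  have hS : ∀ h₁ h₂, MeasurableSet {p : X × ℝ | hyp h₁ p.1 ≠ hyp h₂ p.1} :=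
    fun h₁ h₂ => by measurability
  rw [disagreement, sum_sum_mul_measureReal_eq_integral hS]
  calc _ = ∫ p, ((-1 / 2) * margin hyp ρ p ^ 2 + 0 * margin hyp ρ p + 1 / 2) ∂μ := by
        refine integral_congr_ae ?_
        filter_upwards [hlab] with p hp
        have hy : p.2 ^ 2 = 1 := by rcases hp with hy | hy <;> simp [hy]
        simp only [Set.indicator_apply, Set.mem_ofPred_eq, Pi.one_apply]
        rw [sum_sum_mul_ite_ne hρ1 fun h => hval h p.1, margin, mul_pow, hy]
        ring
    _ = _ := by
        rw [integral_quadratic (memLp_margin hmeas hval hlab), probReal_univ]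
        ring

end MajorityVote

theorem c_bound_joint_error_disagreement_general
    (X : Type*) [MeasurableSpace X]
    (μ : Measure (X × ℝ)) [IsProbabilityMeasure μ]
    (H : Type*) [Fintype H]
    (hyp : H → X → ℝ) (hmeas : ∀ h, Measurable (hyp h))
    (hval : ∀ h x, hyp h x = 1 ∨ hyp h x = -1)
    (hlab : ∀ᵐ p ∂μ, p.2 = 1 ∨ p.2 = -1)
    (ρ : H → ℝ) (hρ1 : ∑ h, ρ h = 1)
    (e d : ℝ)
    (he : e = ∑ h₁, ∑ h₂, ρ h₁ * ρ h₂ *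
        (μ {p | hyp h₁ p.1 ≠ p.2 ∧ hyp h₂ p.1 ≠ p.2}).toReal)
    (hd : d = ∑ h₁, ∑ h₂, ρ h₁ * ρ h₂ *
        (μ {p | hyp h₁ p.1 ≠ hyp h₂ p.1}).toReal)
    (hcond : 2 * e + d < 1) :
    (μ {p | p.2 * ∑ h, ρ h * hyp h p.1 ≤ 0}).toReal ≤
      1 - (1 - (2 * e + d)) ^ 2 / (1 - 2 * d) := by
  have he' : e = jointError μ hyp ρ := he
  have hd' : d = disagreement μ hyp ρ := hd
  have h_first : 1 - (2 * e + d) = ∫ p, margin hyp ρ p ∂μ := by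
    rw [he', hd', jointError_eq hmeas hval hlab hρ1, disagreement_eq hmeas hval hlab hρ1]
    ring
  have h_second : 1 - 2 * d = ∫ p, margin hyp ρ p ^ 2 ∂μ := by
    rw [hd', disagreement_eq hmeas hval hlab hρ1]
    ring
  have h_pos : 0 < ∫ p, margin hyp ρ p ∂μ := h_first ▸ sub_pos.mpr hcond
  rw [h_first, h_second]
  exact measureReal_nonpos_le_one_sub_sq_integral_div (memLp_margin hmeas hval hlab) h_pos

/-- The C-bound expressed via the expected disagreement `d_ρ` and the expected
joint error `e_ρ`: if `2e_ρ + d_ρ < 1`, then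
`L(MV_ρ) ≤ 1 - (1 - (2e_ρ + d_ρ))²/(1 - 2d_ρ)`. -/
theorem c_bound_joint_error_disagreement
    (X : Type*) [MeasurableSpace X]
    (μ : Measure (X × ℝ)) [IsProbabilityMeasure μ]
    (H : Type*) [Fintype H]
    (hyp : H → X → ℝ) (hmeas : ∀ h, Measurable (hyp h))
    (hval : ∀ h x, hyp h x = 1 ∨ hyp h x = -1)
    (hlab : ∀ᵐ p ∂μ, p.2 = 1 ∨ p.2 = -1)
    (ρ : H → ℝ) (hρ0 : ∀ h, 0 ≤ ρ h) (hρ1 : ∑ h, ρ h = 1)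
    (e d : ℝ)
    (he : e = ∑ h₁, ∑ h₂, ρ h₁ * ρ h₂ *
        (μ {p | hyp h₁ p.1 ≠ p.2 ∧ hyp h₂ p.1 ≠ p.2}).toReal)
    (hd : d = ∑ h₁, ∑ h₂, ρ h₁ * ρ h₂ *
        (μ {p | hyp h₁ p.1 ≠ hyp h₂ p.1}).toReal)
    (hcond : 2 * e + d < 1) :
    (μ {p | p.2 * ∑ h, ρ h * hyp h p.1 ≤ 0}).toReal ≤
      1 - (1 - (2 * e + d)) ^ 2 / (1 - 2 * d) :=
  c_bound_joint_error_disagreement_general X μ H hyp hmeas hval hlab ρ hρ1 e d he hd hcond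
end
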